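/- arXiv:math/0506294 — 6 statements merged into one kernel-verified Lean document; each statement's English description precedes it below -/
import Mathlib

section
/- Let q > 1 be a natural number, c an odd prime not dividing q, and suppose e(c,q) ≡ 2 (mod 4), where e(c,q) is the multiplicative order of q modulo c. Then for any natural number x, c divides q^x - (-1)^x if and only if e(c,q)/2 divides x. -/
/-!
Write `e = 2m` with `m` odd. In the field `ZMod c` the element `q ^ m` has order 2, so it is `-1`.
Hence `q ^ x = (-1) ^ x` forces `q ^ (2x) = 1`, i.e. `2m ∣ 2x`; conversely for `x = m k` both
sides equal `(-1) ^ k`, as `m` is odd.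
-/

section OrderTwoMul

variable {R : Type*} [Ring R] [NoZeroDivisors R] {a : R} {m : ℕ}

theorem pow_eq_neg_one_of_orderOf_eq_two_mul (hm : 0 < m) (h : orderOf a = 2 * m) :
    a ^ m = -1 := by
  have hsq : a ^ m * a ^ m = 1 := by rw [← pow_add, ← two_mul, ← h, pow_orderOf_eq_one]
  have hne : a ^ m ≠ 1 := pow_ne_one_of_lt_orderOf hm.ne' (by omega)
  exact (mul_self_eq_one_iff.mp hsq).resolve_left hne

theorem pow_eq_neg_one_pow_iff_dvd_of_orderOf_eq_two_mul (hm : Odd m)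
    (h : orderOf a = 2 * m) (x : ℕ) : a ^ x = (-1) ^ x ↔ m ∣ x := by
  constructor
  · intro hx
    have hsq : a ^ (2 * x) = 1 := by
      rw [pow_mul', hx, ← pow_mul', (even_two_mul x).neg_one_pow]
    have h2m : 2 * m ∣ 2 * x := h ▸ orderOf_dvd_of_pow_eq_one hsq
    exact Nat.dvd_of_mul_dvd_mul_left two_pos h2m
  · rintro ⟨k, rfl⟩
    rw [pow_mul, pow_eq_neg_one_of_orderOf_eq_two_mul hm.pos h, pow_mul, hm.neg_one_pow]

end OrderTwoMul

theorem intCast_dvd_pow_sub_neg_one_pow_iff (q c x : ℕ) :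
    (c : ℤ) ∣ (q : ℤ) ^ x - (-1) ^ x ↔ (q : ZMod c) ^ x = (-1) ^ x := by
  rw [← ZMod.intCast_eq_intCast_iff_dvd_sub, eq_comm]
  push_cast
  rfl

theorem stmt_2_general (q c x : ℕ) (hc : c.Prime)
    (he : orderOf (q : ZMod c) % 4 = 2) :
    (c : ℤ) ∣ (q : ℤ) ^ x - (-1) ^ x ↔ orderOf (q : ZMod c) / 2 ∣ x := by
  have := Fact.mk hc
  have hm : Odd (orderOf (q : ZMod c) / 2) := Nat.odd_iff.mpr (by omega)
  rw [intCast_dvd_pow_sub_neg_one_pow_iff]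
  exact pow_eq_neg_one_pow_iff_dvd_of_orderOf_eq_two_mul hm (by omega) x

theorem stmt_2 (q c x : ℕ) (hq : 1 < q) (hc : c.Prime) (hodd : Odd c)
    (hcq : ¬ c ∣ q) (he : orderOf (q : ZMod c) % 4 = 2) :
    (c : ℤ) ∣ (q : ℤ) ^ x - (-1) ^ x ↔ orderOf (q : ZMod c) / 2 ∣ x :=
  stmt_2_general q c x hc he
end

section
/- Let q > 1 be a natural number, c an odd prime not dividing q, and suppose e(c,q) ≡ 0 (mod 4), where e(c,q) is the multiplicative order of q modulo c. Then for any natural number x, c divides q^x - (-1)^x if and only if e(c,q) divides x. -/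
section FourDvdOrderOf

variable {M : Type*} [Monoid M] [HasDistribNeg M] {g : M}

theorem pow_ne_neg_one_of_four_dvd_orderOf (h4 : 4 ∣ orderOf g) {x : ℕ} (hx : Odd x) :
    g ^ x ≠ -1 := by
  intro hg
  have h2x : orderOf g ∣ 2 * x := orderOf_dvd_of_pow_eq_one (by rw [pow_mul', hg, neg_one_sq])
  obtain ⟨k, hk⟩ := h4.trans h2x
  obtain ⟨m, rfl⟩ := hx
  omega

theorem pow_eq_neg_one_pow_iff_orderOf_dvd (h4 : 4 ∣ orderOf g) (x : ℕ) :
    g ^ x = (-1) ^ x ↔ orderOf g ∣ x := by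
  rcases Nat.even_or_odd x with hx | hx
  · rw [hx.neg_one_pow, orderOf_dvd_iff_pow_eq_one]
  · rw [hx.neg_one_pow]
    refine iff_of_false (pow_ne_neg_one_of_four_dvd_orderOf h4 hx) fun hdvd => ?_
    obtain ⟨k, hk⟩ := h4.trans hdvd
    obtain ⟨m, rfl⟩ := hx
    omega

end FourDvdOrderOf

theorem stmt_3_general (q c x : ℕ) (he : orderOf (q : ZMod c) % 4 = 0) :
    (c : ℤ) ∣ (q : ℤ) ^ x - (-1) ^ x ↔ orderOf (q : ZMod c) ∣ x := by
  rw [← pow_eq_neg_one_pow_iff_orderOf_dvd (Nat.dvd_of_mod_eq_zero he),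
    ← ZMod.intCast_eq_intCast_iff_dvd_sub]
  push_cast
  exact eq_comm

theorem stmt_3 (q c x : ℕ) (hq : 1 < q) (hc : c.Prime) (hodd : Odd c)
    (hcq : ¬ c ∣ q) (he : orderOf (q : ZMod c) % 4 = 0) :
    (c : ℤ) ∣ (q : ℤ) ^ x - (-1) ^ x ↔ orderOf (q : ZMod c) ∣ x :=
  stmt_3_general q c x he
end

section
/- For every natural number n, the three numbers m1 = 2^(2n+1) - 1, m2 = 2^(2n+1) - 2^(n+1) + 1, and m3 = 2^(2n+1) + 2^(n+1) + 1 are pairwise coprime. -/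
/-!
With `x = 2 ^ n` the three numbers are `2x² - 1`, `2x² - 2x + 1` and `2x² + 2x + 1`.
By Sophie Germain's identity the last two multiply to `(2x²)² + 1`, and for even `q` any common
divisor of `q - 1` and `q² + 1` divides `(q² + 1) - (q + 1)(q - 1) = 2`, so `m₁` is coprime to
`m₂ m₃`. Finally `m₃ - m₂ = 4x` is a power of two and `m₂` is odd.
-/

namespace Nat

theorem two_mul_sq_sub_two_mul_add_one_mul_two_mul_sq_add_two_mul_add_one (x : ℕ) :
    (2 * x ^ 2 - 2 * x + 1) * (2 * x ^ 2 + 2 * x + 1) = (2 * x ^ 2) ^ 2 + 1 := by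
  have hx : 2 * x ≤ 2 * x ^ 2 := Nat.mul_le_mul_left 2 (Nat.le_self_pow two_ne_zero x)
  zify [hx]
  linear_combination (pow_four_add_four_mul_pow_four' (a := (1 : ℤ)) (b := x)).symm

theorem coprime_sub_one_sq_add_one {q : ℕ} (hq : Even q) : Coprime (q - 1) (q ^ 2 + 1) := by
  rcases Nat.eq_zero_or_pos q with rfl | hpos
  · simp
  have hsplit : q ^ 2 + 1 = 2 + (q + 1) * (q - 1) := by
    zify [hpos]
    ring
  rw [hsplit, coprime_add_mul_right_right, coprime_two_right]
  exact Nat.Even.sub_odd hpos hq odd_one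

theorem coprime_add_two_pow_of_odd {m : ℕ} (hm : Odd m) (k : ℕ) : Coprime m (m + 2 ^ k) :=
  coprime_self_add_right.mpr ((coprime_two_right.mpr hm).pow_right k)

end Nat

theorem stmt_8 (n : ℕ) :
    Nat.Coprime (2 ^ (2 * n + 1) - 1) (2 ^ (2 * n + 1) - 2 ^ (n + 1) + 1) ∧
    Nat.Coprime (2 ^ (2 * n + 1) - 1) (2 ^ (2 * n + 1) + 2 ^ (n + 1) + 1) ∧
    Nat.Coprime (2 ^ (2 * n + 1) - 2 ^ (n + 1) + 1) (2 ^ (2 * n + 1) + 2 ^ (n + 1) + 1) := by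
  have hq : 2 ^ (2 * n + 1) = 2 * (2 ^ n) ^ 2 := by ring
  have hr : 2 ^ (n + 1) = 2 * 2 ^ n := by ring
  have hd : 2 ^ (n + 2) = 4 * 2 ^ n := by ring
  rw [hq, hr]
  set x := 2 ^ n
  have h₁ : Nat.Coprime (2 * x ^ 2 - 1) ((2 * x ^ 2 - 2 * x + 1) * (2 * x ^ 2 + 2 * x + 1)) := by
    rw [Nat.two_mul_sq_sub_two_mul_add_one_mul_two_mul_sq_add_two_mul_add_one]
    exact Nat.coprime_sub_one_sq_add_one (even_two_mul _)
  have hm₂ : Odd (2 * x ^ 2 - 2 * x + 1) := by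
    rw [← Nat.mul_sub]
    exact odd_two_mul_add_one _
  have hm₃ : 2 * x ^ 2 + 2 * x + 1 = 2 * x ^ 2 - 2 * x + 1 + 2 ^ (n + 2) := by
    have : 2 * x ≤ 2 * x ^ 2 := Nat.mul_le_mul_left 2 (Nat.le_self_pow two_ne_zero x)
    omega
  refine ⟨h₁.coprime_dvd_right (dvd_mul_right _ _), h₁.coprime_dvd_right (dvd_mul_left _ _), ?_⟩
  rw [hm₃]
  exact Nat.coprime_add_two_pow_of_odd hm₂ _
end

section
/- For every natural number n, set m1 = 3^(2n+1) - 1, m2 = 3^(2n+1) + 1, m3 = 3^(2n+1) - 3^(n+1) + 1, m4 = 3^(2n+1) + 3^(n+1) + 1. Then gcd(m1, m2) = 2, and gcd(mi, mj) = 1 for all other pairs i ≠ j. -/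
/-!
Put `s = 3 ^ n`, so that `3 ^ (2 * n + 1) = 3 s²` and `3 ^ (n + 1) = 3 s`. Then `m₁ = 3s² - 1` and
`m₂ = 3s² + 1` are consecutive even numbers, and every other pair except `(m₃, m₄)` satisfies an
explicit Bézout identity with polynomial coefficients, valid in any commutative ring. For `m₃` and
`m₄` one has `(s + 1) m₃ - (s - 1) m₄ = 2`, and `m₃ = 3 s (s - 1) + 1` is odd.
-/

theorem Nat.gcd_sub_one_add_one_of_odd {q : ℕ} (hq : Odd q) : Nat.gcd (q - 1) (q + 1) = 2 := by
  obtain ⟨k, rfl⟩ := hq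
  rw [show 2 * k + 1 - 1 = 2 * k by omega, show 2 * k + 1 + 1 = 2 * (k + 1) by ring,
    Nat.gcd_mul_left, Nat.coprime_self_add_right.mpr (Nat.coprime_one_right k), mul_one]

namespace ReeTorus

variable {R : Type*} [CommRing R] (s : R)

-- At `s = 3 ^ n` these are the paper's `m₁, …, m₄`.
def m₁ : R := 3 * s ^ 2 - 1
def m₂ : R := 3 * s ^ 2 + 1
def m₃ : R := 3 * s ^ 2 - 3 * s + 1
def m₄ : R := 3 * s ^ 2 + 3 * s + 1

theorem isCoprime_m₁_m₃ : IsCoprime (m₁ s) (m₃ s) :=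
  ⟨1 - 3 * s, 3 * s + 2, by unfold m₁ m₃; ring⟩

theorem isCoprime_m₁_m₄ : IsCoprime (m₁ s) (m₄ s) :=
  ⟨1 + 3 * s, 2 - 3 * s, by unfold m₁ m₄; ring⟩

theorem isCoprime_m₂_m₃ : IsCoprime (m₂ s) (m₃ s) :=
  ⟨1 - s, s, by unfold m₂ m₃; ring⟩

theorem isCoprime_m₂_m₄ : IsCoprime (m₂ s) (m₄ s) :=
  ⟨1 + s, -s, by unfold m₂ m₄; ring⟩

-- With `s (s - 1) = 2 k`: `1 = m₃ - 6 k = m₃ - 3 k ((s + 1) m₃ - (s - 1) m₄)`.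
theorem isCoprime_m₃_m₄ {s : R} (hs : Even (s * (s - 1))) : IsCoprime (m₃ s) (m₄ s) := by
  obtain ⟨k, hk⟩ := hs
  exact ⟨1 - 3 * k * (s + 1), 3 * k * (s - 1), by unfold m₃ m₄; linear_combination 3 * hk⟩

end ReeTorus

open ReeTorus in
theorem stmt_9 (n : ℕ) :
    Nat.gcd (3 ^ (2 * n + 1) - 1) (3 ^ (2 * n + 1) + 1) = 2 ∧
    Nat.gcd (3 ^ (2 * n + 1) - 1) (3 ^ (2 * n + 1) - 3 ^ (n + 1) + 1) = 1 ∧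
    Nat.gcd (3 ^ (2 * n + 1) - 1) (3 ^ (2 * n + 1) + 3 ^ (n + 1) + 1) = 1 ∧
    Nat.gcd (3 ^ (2 * n + 1) + 1) (3 ^ (2 * n + 1) - 3 ^ (n + 1) + 1) = 1 ∧
    Nat.gcd (3 ^ (2 * n + 1) + 1) (3 ^ (2 * n + 1) + 3 ^ (n + 1) + 1) = 1 ∧
    Nat.gcd (3 ^ (2 * n + 1) - 3 ^ (n + 1) + 1) (3 ^ (2 * n + 1) + 3 ^ (n + 1) + 1) = 1 := by
  refine ⟨Nat.gcd_sub_one_add_one_of_odd (Odd.pow (by decide)), ?_⟩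
  rw [show 3 ^ (2 * n + 1) = 3 * (3 ^ n) ^ 2 by ring, show 3 ^ (n + 1) = 3 * 3 ^ n by ring]
  have hs : 1 ≤ 3 ^ n := Nat.one_le_pow _ _ (by norm_num)
  generalize 3 ^ n = s at hs
  have h₁ : 1 ≤ 3 * s ^ 2 := by nlinarith
  have h₃ : 3 * s ≤ 3 * s ^ 2 := by nlinarith
  simp only [← Nat.coprime_iff_gcd_eq_one, ← Nat.isCoprime_iff_coprime]
  push_cast [h₁, h₃]
  exact ⟨isCoprime_m₁_m₃ _, isCoprime_m₁_m₄ _, isCoprime_m₂_m₃ _, isCoprime_m₂_m₄ _,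
    isCoprime_m₃_m₄ (Int.even_mul_pred_self _)⟩
end

section
/- For every natural number n, with q = 2^(2n+1), set m1 = q - 1, m2 = q + 1, m3 = q² + 1, m4 = q² - q + 1, m5 = q² - q·2^(n+1) + q - 2^(n+1) + 1, m6 = q² + q·2^(n+1) + q + 2^(n+1) + 1. Then gcd(m2, m4) = 3 and gcd(mi, mj) = 1 for all other pairs i ≠ j. -/
/-!
With `x = 2 ^ n` we have `q = 2 x²`; `m₁, …, m₄` are the cyclotomic values `Φ₁(q), Φ₂(q), Φ₄(q),
Φ₆(q)`, and `m₅ m₆ = Φ₁₂(q) = q⁴ - q² + 1` is an Aurifeuillean factorization. Reducing one of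
`Φ₁(q), Φ₂(q), Φ₄(q), Φ₆(q), Φ₁₂(q)` modulo another leaves `1`, `±2`, `3` or `-2 (q - 1)`. As `q`
is even these values are odd, `3 ∤ q² + 1` always, and `3 ∣ q + 1` since `q` is an odd power of
`2`; hence all gcds are `1` except `gcd(m₂, m₄) = gcd(q + 1, 3) = 3`. Finally
`m₆ - m₅ = 4 x (q + 1)` is coprime to `m₅`, since `m₅ ≡ 1 (mod x)` and `m₅ ∣ Φ₁₂(q)`.
-/

theorem IsCoprime.of_eq_add_mul {R : Type*} [CommRing R] {a b c : R} (k : R)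
    (hc : IsCoprime a c) (h : b = c + a * k) : IsCoprime a b :=
  h ▸ hc.add_mul_left_right k

theorem not_three_dvd_sq_add_one (q : ℤ) : ¬ 3 ∣ q ^ 2 + 1 := by
  intro h
  have h3 := (ZMod.intCast_zmod_eq_zero_iff_dvd (q ^ 2 + 1) 3).2 (mod_cast h)
  push_cast at h3
  generalize (q : ZMod 3) = a at h3
  revert a
  decide

section CyclotomicValues

variable {q : ℤ}

theorem isCoprime_sub_one_add_one (hq : Even q) : IsCoprime (q - 1) (q + 1) :=
  (Int.isCoprime_two_right.2 (hq.sub_odd odd_one)).of_eq_add_mul 1 (by ring)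

theorem isCoprime_sub_one_sq_add_one (hq : Even q) : IsCoprime (q - 1) (q ^ 2 + 1) :=
  (Int.isCoprime_two_right.2 (hq.sub_odd odd_one)).of_eq_add_mul (q + 1) (by ring)

theorem isCoprime_sub_one_sq_sub_add_one : IsCoprime (q - 1) (q ^ 2 - q + 1) :=
  isCoprime_one_right.of_eq_add_mul q (by ring)

theorem isCoprime_sub_one_cyclotomic_twelve : IsCoprime (q - 1) (q ^ 4 - q ^ 2 + 1) :=
  isCoprime_one_right.of_eq_add_mul (q ^ 3 + q ^ 2) (by ring)

theorem isCoprime_add_one_sq_add_one (hq : Even q) : IsCoprime (q + 1) (q ^ 2 + 1) :=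
  (Int.isCoprime_two_right.2 (hq.add_odd odd_one)).of_eq_add_mul (q - 1) (by ring)

theorem isCoprime_add_one_cyclotomic_twelve : IsCoprime (q + 1) (q ^ 4 - q ^ 2 + 1) :=
  isCoprime_one_right.of_eq_add_mul (q ^ 3 - q ^ 2) (by ring)

theorem isCoprime_sq_add_one_sq_sub_add_one : IsCoprime (q ^ 2 + 1) (q ^ 2 - q + 1) :=
  have hq : IsCoprime q (q ^ 2 + 1) := isCoprime_one_right.of_eq_add_mul q (by ring)
  hq.symm.neg_right.of_eq_add_mul 1 (by ring)

theorem isCoprime_sq_add_one_cyclotomic_twelve : IsCoprime (q ^ 2 + 1) (q ^ 4 - q ^ 2 + 1) :=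
  ((Int.prime_three.coprime_iff_not_dvd.2 (not_three_dvd_sq_add_one q)).symm).of_eq_add_mul
    (q ^ 2 - 2) (by ring)

theorem isCoprime_sq_sub_add_one_cyclotomic_twelve (hq : Even q) :
    IsCoprime (q ^ 2 - q + 1) (q ^ 4 - q ^ 2 + 1) := by
  have hodd : Odd (q ^ 2 - q + 1) := by
    rw [show q ^ 2 - q + 1 = q * (q - 1) + 1 by ring]
    exact (hq.mul_right _).add_one
  have h : IsCoprime (q ^ 2 - q + 1) (2 * (q - 1)) :=
    (Int.isCoprime_two_right.2 hodd).mul_right isCoprime_sub_one_sq_sub_add_one.symm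
  exact h.neg_right.of_eq_add_mul (q ^ 2 + q - 1) (by ring)

theorem gcd_add_one_sq_sub_add_one (h : 3 ∣ q + 1) : Int.gcd (q + 1) (q ^ 2 - q + 1) = 3 := by
  rw [show q ^ 2 - q + 1 = 3 + (q + 1) * (q - 2) by ring, Int.gcd_add_mul_left_right]
  exact Int.gcd_eq_natAbs_right h

end CyclotomicValues

section Aurifeuillean

variable {q x : ℤ}

theorem cyclotomic_twelve_eq_mul_of_eq_two_mul_sq (hqx : q = 2 * x ^ 2) :
    q ^ 4 - q ^ 2 + 1 =
      (q ^ 2 - q * (2 * x) + q - 2 * x + 1) * (q ^ 2 + q * (2 * x) + q + 2 * x + 1) := by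
  subst hqx
  ring

theorem IsCoprime.aurifeuillean_factors {a : ℤ} (hqx : q = 2 * x ^ 2)
    (h : IsCoprime a (q ^ 4 - q ^ 2 + 1)) :
    IsCoprime a (q ^ 2 - q * (2 * x) + q - 2 * x + 1) ∧
      IsCoprime a (q ^ 2 + q * (2 * x) + q + 2 * x + 1) := by
  rw [cyclotomic_twelve_eq_mul_of_eq_two_mul_sq hqx] at h
  exact ⟨h.of_mul_right_left, h.of_mul_right_right⟩

theorem isCoprime_aurifeuillean_factors (hqx : q = 2 * x ^ 2) :
    IsCoprime (q ^ 2 - q * (2 * x) + q - 2 * x + 1) (q ^ 2 + q * (2 * x) + q + 2 * x + 1) := by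
  set a := q ^ 2 - q * (2 * x) + q - 2 * x + 1 with ha
  have ha_two : IsCoprime a 2 :=
    Int.isCoprime_two_right.2 ⟨2 * x ^ 4 - 2 * x ^ 3 + x ^ 2 - x, by rw [ha, hqx]; ring⟩
  have ha_x : IsCoprime a x :=
    (isCoprime_one_right.of_eq_add_mul (4 * x ^ 3 - 4 * x ^ 2 + 2 * x - 2)
      (by rw [ha, hqx]; ring)).symm
  have ha_succ : IsCoprime a (q + 1) :=
    (isCoprime_add_one_cyclotomic_twelve.aurifeuillean_factors hqx).1.symm
  exact ((ha_two.pow_right (n := 2)).mul_right ha_x |>.mul_right ha_succ).of_eq_add_mul 1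
    (by ring)

end Aurifeuillean

theorem Nat.cast_sq_sub_mul_add_sub_add_one {a b : ℕ} (h : b ≤ a) :
    ((a ^ 2 - a * b + a - b + 1 : ℕ) : ℤ) = (a : ℤ) ^ 2 - a * b + a - b + 1 := by
  have hab : a * b ≤ a ^ 2 := sq a ▸ Nat.mul_le_mul_left a h
  have hb : b ≤ a ^ 2 - a * b + a := h.trans (Nat.le_add_left a _)
  push_cast [Nat.cast_sub hab, Nat.cast_sub hb]
  ring

theorem stmt_10 (n : ℕ) (q : ℕ) (hq : q = 2 ^ (2 * n + 1)) :
    let m1 := q - 1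
    let m2 := q + 1
    let m3 := q ^ 2 + 1
    let m4 := q ^ 2 - q + 1
    let m5 := q ^ 2 - q * 2 ^ (n + 1) + q - 2 ^ (n + 1) + 1
    let m6 := q ^ 2 + q * 2 ^ (n + 1) + q + 2 ^ (n + 1) + 1
    Nat.gcd m2 m4 = 3 ∧
    Nat.gcd m1 m2 = 1 ∧ Nat.gcd m1 m3 = 1 ∧ Nat.gcd m1 m4 = 1 ∧
    Nat.gcd m1 m5 = 1 ∧ Nat.gcd m1 m6 = 1 ∧
    Nat.gcd m2 m3 = 1 ∧ Nat.gcd m2 m5 = 1 ∧ Nat.gcd m2 m6 = 1 ∧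
    Nat.gcd m3 m4 = 1 ∧ Nat.gcd m3 m5 = 1 ∧ Nat.gcd m3 m6 = 1 ∧
    Nat.gcd m4 m5 = 1 ∧ Nat.gcd m4 m6 = 1 ∧ Nat.gcd m5 m6 = 1 := by
  intro m1 m2 m3 m4 m5 m6
  set x : ℤ := 2 ^ n
  have hqx : (q : ℤ) = 2 * x ^ 2 := by rw [hq]; push_cast; ring
  have ht : ((2 ^ (n + 1) : ℕ) : ℤ) = 2 * x := by push_cast; ring
  have hq_even : Even (q : ℤ) := ⟨x ^ 2, by rw [hqx]; ring⟩
  have h3 : (3 : ℤ) ∣ q + 1 := by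
    have h := (odd_two_mul_add_one n).nat_add_dvd_pow_add_pow 2 1
    rw [one_pow, ← hq] at h
    exact_mod_cast h
  have e1 : (m1 : ℤ) = q - 1 := by push_cast [m1, Nat.cast_sub (hq ▸ Nat.one_le_two_pow)]; ring
  have e4 : (m4 : ℤ) = q ^ 2 - q + 1 := by
    push_cast [m4, Nat.cast_sub (Nat.le_self_pow two_ne_zero q)]; ring
  have e5 : (m5 : ℤ) = q ^ 2 - q * (2 * x) + q - 2 * x + 1 := by
    rw [Nat.cast_sq_sub_mul_add_sub_add_one (hq ▸ Nat.pow_le_pow_right two_pos (by omega)), ht]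
  have e6 : (m6 : ℤ) = q ^ 2 + q * (2 * x) + q + 2 * x + 1 := by push_cast [m6, ← ht]; ring
  simp only [← Int.gcd_natCast_natCast, e1, e4, e5, e6, ← Int.isCoprime_iff_gcd_eq_one, m2, m3]
  push_cast
  have h15 := isCoprime_sub_one_cyclotomic_twelve.aurifeuillean_factors hqx
  have h25 := isCoprime_add_one_cyclotomic_twelve.aurifeuillean_factors hqx
  have h35 := isCoprime_sq_add_one_cyclotomic_twelve.aurifeuillean_factors hqx
  have h45 :=
    (isCoprime_sq_sub_add_one_cyclotomic_twelve hq_even).aurifeuillean_factors hqx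
  exact ⟨gcd_add_one_sq_sub_add_one h3, isCoprime_sub_one_add_one hq_even,
    isCoprime_sub_one_sq_add_one hq_even, isCoprime_sub_one_sq_sub_add_one, h15.1, h15.2,
    isCoprime_add_one_sq_add_one hq_even, h25.1, h25.2, isCoprime_sq_add_one_sq_sub_add_one,
    h35.1, h35.2, h45.1, h45.2, isCoprime_aurifeuillean_factors hqx⟩
end

section
/- Let r and s be odd primes with r ≠ s, and let n ≥ 5. In the alternating group Alt_n, there exists an element of order r·s if and only if r + s ≤ n. -/
/-!
A permutation has order the lcm of its cycle lengths, so an element of order `r * s` needs a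
cycle of length divisible by `r` and one of length divisible by `s`. Either these are distinct
disjoint cycles, moving at least `r + s` points, or they coincide in a single cycle of length at
least `r * s ≥ r + s`. Conversely, an `r`-cycle times a disjoint `s`-cycle has order `r * s`, and
it is even because both cycles have odd length.
-/

open Equiv Equiv.Perm

theorem Prime.exists_mem_dvd_of_dvd_multiset_lcm {α : Type*} [CommMonoidWithZero α]
    [NormalizedGCDMonoid α] {p : α} (hp : Prime p) {m : Multiset α} (h : p ∣ m.lcm) :
    ∃ a ∈ m, p ∣ a := by
  induction m using Multiset.induction_on with
  | empty => exact absurd (isUnit_of_dvd_one (by simpa using h)) hp.not_isUnit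
  | cons a m ih =>
    rw [Multiset.lcm_cons, hp.dvd_lcm] at h
    rcases h with ha | hm
    · exact ⟨a, Multiset.mem_cons_self a m, ha⟩
    · obtain ⟨b, hb, hpb⟩ := ih hm
      exact ⟨b, Multiset.mem_cons_of_mem hb, hpb⟩

theorem Multiset.add_le_sum_of_mem_of_ne {α : Type*} [DecidableEq α] [AddCommMonoid α]
    [PartialOrder α] [CanonicallyOrderedAdd α] [IsOrderedAddMonoid α] {m : Multiset α} {a b : α}
    (ha : a ∈ m) (hb : b ∈ m) (hab : a ≠ b) : a + b ≤ m.sum := by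
  have hb' : b ∈ m.erase a := (Multiset.mem_erase_of_ne hab.symm).mpr hb
  calc a + b ≤ a + (m.erase a).sum := by gcongr; exact Multiset.le_sum_of_mem hb'
    _ = m.sum := by rw [← Multiset.sum_cons, Multiset.cons_erase ha]

namespace Equiv.Perm

variable {α : Type*} [Fintype α] [DecidableEq α]

theorem exists_mem_cycleType_dvd {σ : Perm α} {p : ℕ} (hp : p.Prime) (h : p ∣ orderOf σ) :
    ∃ a ∈ σ.cycleType, p ∣ a :=
  Prime.exists_mem_dvd_of_dvd_multiset_lcm hp.prime (by rwa [lcm_cycleType])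

theorem add_le_card_of_mul_dvd_orderOf {σ : Perm α} {p q : ℕ} (hp : p.Prime) (hq : q.Prime)
    (hpq : p ≠ q) (h : p * q ∣ orderOf σ) : p + q ≤ Fintype.card α := by
  obtain ⟨a, ha, hpa⟩ := exists_mem_cycleType_dvd hp (dvd_of_mul_right_dvd h)
  obtain ⟨b, hb, hqb⟩ := exists_mem_cycleType_dvd hq (dvd_of_mul_left_dvd h)
  have ha0 : 0 < a := by have := two_le_of_mem_cycleType ha; omega
  have hb0 : 0 < b := by have := two_le_of_mem_cycleType hb; omega
  refine le_trans ?_ (sum_cycleType_le σ)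
  by_cases hab : a = b
  · subst hab
    have hpqa : p * q ∣ a :=
      ((Nat.coprime_primes hp hq).mpr hpq).mul_dvd_of_dvd_of_dvd hpa hqb
    calc p + q ≤ p * q := Nat.add_le_mul hp.two_le hq.two_le
      _ ≤ a := Nat.le_of_dvd ha0 hpqa
      _ ≤ σ.cycleType.sum := Multiset.le_sum_of_mem ha
  · calc p + q ≤ a + b := add_le_add (Nat.le_of_dvd ha0 hpa) (Nat.le_of_dvd hb0 hqb)
      _ ≤ σ.cycleType.sum := Multiset.add_le_sum_of_mem_of_ne ha hb hab

theorem exists_alternatingGroup_orderOf_eq_lcm {p q : ℕ} (hp : Odd p) (hq : Odd q)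
    (hp1 : 1 < p) (hq1 : 1 < q) (h : p + q ≤ Fintype.card α) :
    ∃ g : alternatingGroup α, orderOf g = p.lcm q := by
  obtain ⟨g, hg⟩ := (exists_with_cycleType_iff α (m := {p, q})).mpr
    ⟨by simpa using h, by simp only [Multiset.insert_eq_cons, Multiset.mem_cons,
      Multiset.mem_singleton, forall_eq_or_imp, forall_eq]; omega⟩
  have hsign : sign g = 1 := by
    rw [sign_of_cycleType, hg]
    exact Even.neg_one_pow (by simpa using (hp.add_odd hq).add even_two)
  refine ⟨⟨g, mem_alternatingGroup.mpr hsign⟩, ?_⟩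
  rw [Subgroup.orderOf_mk, ← lcm_cycleType, hg]
  simp only [Multiset.insert_eq_cons, Multiset.lcm_cons, Multiset.lcm_singleton, normalize_eq]
  rfl

end Equiv.Perm

theorem stmt_12_general (n r s : ℕ) (hr : r.Prime) (hs : s.Prime)
    (hrodd : Odd r) (hsodd : Odd s) (hrs : r ≠ s) :
    (∃ g : alternatingGroup (Fin n), orderOf g = r * s) ↔ r + s ≤ n := by
  constructor
  · rintro ⟨g, hg⟩
    simpa using add_le_card_of_mul_dvd_orderOf (σ := (g : Perm (Fin n))) hr hs hrs
      (by rw [Subgroup.orderOf_coe, hg])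
  · intro h
    rw [← ((Nat.coprime_primes hr hs).mpr hrs).lcm_eq_mul]
    exact exists_alternatingGroup_orderOf_eq_lcm hrodd hsodd hr.one_lt hs.one_lt (by simpa using h)

theorem stmt_12 (n r s : ℕ) (hn : 5 ≤ n) (hr : r.Prime) (hs : s.Prime)
    (hrodd : Odd r) (hsodd : Odd s) (hrs : r ≠ s) (hrn : r ≤ n) (hsn : s ≤ n) :
    (∃ g : alternatingGroup (Fin n), orderOf g = r * s) ↔ r + s ≤ n :=
  stmt_12_general n r s hr hs hrodd hsodd hrs
end
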